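/- arXiv:1708.04723 — 5 statements merged into one kernel-verified Lean document; each statement's English description precedes it below -/
import Mathlib

section
/- Let Γ be a grid (an (a × b)-grid for some a, b ≥ 1) and let r_1 ≤ r_2. For each i ∈ {1,2}, let Z_i be an (r_i × r_i)-grid that is a minor of Γ with minor mapping μ_i, and assume μ_1(V(Z_1)) ∩ μ_2(V(Z_2)) = ∅ (where μ_i(V(Z_i)) denotes the union of the sets μ_i(v) over v ∈ V(Z_i)). For each i ∈ {1,2}, let Y_i be the set of vertices in the first row of Z_i, and for each v ∈ Y_i pick some q(v) ∈ μ_i(v); let W_i = { q(v) : v ∈ Y_i }. Then W_1 ∪ W_2 is (1/384)-cut-linked in Γ. -/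
/-!
Let `c` be the number of edges leaving `A`. A row or column of `Γ` meeting both sides contains a cut
edge, so if every row (or every column) of `Γ` is split then `c ≥ a` (or `c ≥ b`), while
`|W₁ ∪ W₂| ≤ 2r₂ ≤ 2 min(a, b)`. Otherwise an unsplit row and an unsplit column lie on the same
side, say in `A`, and every vertex of `Aᶜ` lies on a split row and a split column, so `|Aᶜ| ≤ c²`.
For a grid minor of order `r`, a column of the minor whose top representative lies in `Aᶜ` either
leaves `Aᶜ`, and there are at most `c` such disjoint connected sets, or lies inside `Aᶜ`; columns of
the second kind have `r` vertices each and there are at most `r` of them, so at most `c` of them fit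
into `Aᶜ`. Hence each `Wᵢ` has at most `2c` vertices in `Aᶜ`.

The bound `r ≤ min(a, b)` comes from projecting to one coordinate of `Γ`: the rows and columns of
the minor are connected, so their projections are intervals, and as every row meets every column,
all rows or all columns of the minor meet a common line of `Γ`.
-/

/-- `μ` is a minor mapping witnessing that `H` is a minor of `G`: branch sets are
nonempty, pairwise disjoint, connected, and every edge of `H` is realized by an edge of
`G` between the corresponding branch sets. -/
def IsMinorMapping {V W : Type*} (G : SimpleGraph V) (H : SimpleGraph W)
    (μ : W → Set V) : Prop :=
  (∀ w, (μ w).Nonempty) ∧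
  (Pairwise fun w w' => Disjoint (μ w) (μ w')) ∧
  (∀ w, (G.induce (μ w)).Connected) ∧
  (∀ ⦃w w'⦄, H.Adj w w' → ∃ u ∈ μ w, ∃ v ∈ μ w', G.Adj u v)

/-- Number of edges of `G` crossing the cut `(A, Aᶜ)`. -/
noncomputable def cutSize {V : Type*} (G : SimpleGraph V) (A : Set V) : ℕ :=
  {e : Sym2 V | e ∈ G.edgeSet ∧ ∃ u ∈ A, ∃ v ∈ Aᶜ, e = s(u, v)}.ncard

/-- `X` is `α`-cut-linked in `G`. -/
def CutLinked {V : Type*} (G : SimpleGraph V) (α : ℝ) (X : Set V) : Prop :=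
  ∀ A : Set V,
    α * (min ((A ∩ X).ncard) ((Aᶜ ∩ X).ncard) : ℕ) ≤ (cutSize G A : ℝ)

/-- The `(a × b)`-grid graph: the box product of two path graphs. -/
def gridGraph (a b : ℕ) : SimpleGraph (Fin a × Fin b) :=
  (SimpleGraph.pathGraph a).boxProd (SimpleGraph.pathGraph b)

open SimpleGraph Function

section Cuts

variable {V : Type*} {G : SimpleGraph V}

def Straddles (A S : Set V) : Prop :=
  (S ∩ A).Nonempty ∧ (S ∩ Aᶜ).Nonempty

lemma straddles_compl {A S : Set V} : Straddles Aᶜ S ↔ Straddles A S := by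
  rw [Straddles, Straddles, compl_compl, and_comm]

lemma cutSize_compl (A : Set V) : cutSize G Aᶜ = cutSize G A := by
  unfold cutSize
  congr 1
  ext e
  simp only [Set.mem_ofPred_eq, compl_compl]
  refine and_congr_right fun _ => ⟨?_, ?_⟩ <;>
    rintro ⟨u, hu, v, hv, rfl⟩ <;> exact ⟨v, hv, u, hu, Sym2.eq_swap⟩

lemma exists_eq_of_induce_preconnected {S : Set V} (hS : (G.induce S).Preconnected)
    (f : V → ℕ) (hf : ∀ ⦃x y⦄, G.Adj x y → f y ≤ f x + 1) {u v : V} (hu : u ∈ S)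
    (hv : v ∈ S) {m : ℕ} (hum : f u ≤ m) (hmv : m ≤ f v) : ∃ w ∈ S, f w = m := by
  rcases hum.eq_or_lt with rfl | hum
  · exact ⟨u, hu, rfl⟩
  obtain ⟨d, -, hlt, hge⟩ := (hS ⟨u, hu⟩ ⟨v, hv⟩).some.exists_boundary_dart
    {z | f z < m} hum (by simpa using hmv)
  have := hf (show G.Adj d.fst d.snd from d.adj)
  exact ⟨d.snd, d.snd.2, by simp only [Set.mem_ofPred_eq, not_lt] at hlt hge; omega⟩

lemma exists_adj_of_straddles {A S : Set V} (hS : (G.induce S).Preconnected)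
    (h : Straddles A S) : ∃ x ∈ S, ∃ y ∈ S, G.Adj x y ∧ x ∈ A ∧ y ∉ A := by
  obtain ⟨⟨u, huS, huA⟩, ⟨v, hvS, hvA⟩⟩ := h
  obtain ⟨d, -, hx, hy⟩ := (hS ⟨u, huS⟩ ⟨v, hvS⟩).some.exists_boundary_dart
    {z | z.1 ∈ A} huA hvA
  exact ⟨d.fst, d.fst.2, d.snd, d.snd.2, d.adj, hx, hy⟩

lemma ncard_le_cutSize [Finite V] {A : Set V} {ι : Type*} [Finite ι] {T : Set ι}
    {S : ι → Set V} (hdisj : T.PairwiseDisjoint S)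
    (hS : ∀ i ∈ T, (G.induce (S i)).Preconnected) (hA : ∀ i ∈ T, Straddles A (S i)) :
    T.ncard ≤ cutSize G A := by
  rw [cutSize, Set.ncard_eq_toFinset_card _ (Set.toFinite _),
    Set.ncard_eq_toFinset_card _ (Set.toFinite _)]
  refine Finset.card_le_card_of_forall_subsingleton (fun i e => ∀ z ∈ e, z ∈ S i)
    (fun i hi => ?_) (fun e _ => ?_)
  · rw [Set.Finite.mem_toFinset] at hi
    obtain ⟨x, hx, y, hy, hxy, hxA, hyA⟩ := exists_adj_of_straddles (hS i hi) (hA i hi)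
    refine ⟨s(x, y), (Set.toFinite _).mem_toFinset.2 ⟨hxy, x, hxA, y, hyA, rfl⟩, ?_⟩
    rintro z hz
    rcases Sym2.mem_iff.1 hz with rfl | rfl <;> assumption
  · rintro i ⟨hi, hei⟩ j ⟨hj, hej⟩
    rw [Set.Finite.mem_toFinset] at hi hj
    exact hdisj.elim_set hi hj _ (hei _ e.out_fst_mem) (hej _ e.out_fst_mem)

lemma ncard_straddling_fibers_le_cutSize [Finite V] {β : Type*} [Finite β] (f : V → β)
    (hf : ∀ x, (G.induce (f ⁻¹' {x})).Preconnected) (A : Set V) :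
    {x | Straddles A (f ⁻¹' {x})}.ncard ≤ cutSize G A :=
  ncard_le_cutSize (fun _ _ _ _ hne => (Set.disjoint_singleton.2 hne).preimage f)
    (fun x _ => hf x) fun _ hx => hx

end Cuts

section Unions

variable {V : Type*} {G : SimpleGraph V}

lemma induce_iUnion_preconnected {W : Type*} {H : SimpleGraph W} (hH : H.Preconnected)
    {μ : W → Set V} (hμ : ∀ w, (G.induce (μ w)).Preconnected)
    (hadj : ∀ ⦃w w'⦄, H.Adj w w' → ∃ u ∈ μ w, ∃ v ∈ μ w', G.Adj u v) :
    (G.induce (⋃ w, μ w)).Preconnected := by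
  have along_walk : ∀ {w w'} (P : H.Walk w w'),
      (G.induce (⋃ x ∈ P.support, μ x)).Preconnected := by
    intro w w' P
    induction P with
    | @nil w =>
      have hunion : ⋃ x ∈ (Walk.nil : H.Walk w w).support, μ x = μ w := by ext; simp
      exact hunion ▸ hμ w
    | @cons w₁ _ _ hww' P ih =>
      obtain ⟨u, hu, v, hv, huv⟩ := hadj hww'
      have hunion : ⋃ x ∈ (Walk.cons hww' P).support, μ x = μ w₁ ∪ ⋃ x ∈ P.support, μ x := by
        ext; simp
      rw [hunion]
      exact (connected_induce_union (hμ _) ih hu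
        (Set.mem_biUnion P.start_mem_support hv) huv).preconnected
  rintro ⟨p, hp⟩ ⟨q, hq⟩
  obtain ⟨w, hpw⟩ := Set.mem_iUnion.1 hp
  obtain ⟨w', hqw'⟩ := Set.mem_iUnion.1 hq
  let P := (hH w w').some
  have hsub : ⋃ x ∈ P.support, μ x ⊆ ⋃ w, μ w :=
    Set.iUnion₂_subset fun x _ => Set.subset_iUnion μ x
  exact (along_walk P ⟨p, Set.mem_biUnion P.start_mem_support hpw⟩
    ⟨q, Set.mem_biUnion P.end_mem_support hqw'⟩).map (induceHomOfLE _ hsub).toHom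

end Unions

section Levels

variable {V : Type*} {G : SimpleGraph V}

lemma exists_level_meeting_all [Finite V] {ι κ : Type*} [Finite ι] [Nonempty ι] [Nonempty κ]
    (f : V → ℕ) (hf : ∀ ⦃x y⦄, G.Adj x y → f y ≤ f x + 1) {R : ι → Set V} {C : κ → Set V}
    (hR : ∀ i, (G.induce (R i)).Preconnected) (hC : ∀ j, (G.induce (C j)).Preconnected)
    (hRC : ∀ i j, (R i ∩ C j).Nonempty) :
    ∃ m, (∀ i, ∃ p ∈ R i, f p = m) ∨ (∀ j, ∃ p ∈ C j, f p = m) := by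
  -- `m` is the least maximum of `f` over the `R i`: either every `R i` reaches down to `m`, or
  -- some `R i` lies strictly above it and every `C j` climbs from `R i₀` to that `R i`.
  obtain ⟨j₀⟩ := ‹Nonempty κ›
  choose top htop hmax using fun i =>
    (R i).exists_max_image f (Set.toFinite _) ((hRC i j₀).mono Set.inter_subset_left)
  obtain ⟨i₀, hi₀⟩ := Finite.exists_min fun i => f (top i)
  refine ⟨f (top i₀), ?_⟩
  by_cases hlow : ∀ i, ∃ p ∈ R i, f p ≤ f (top i₀)
  · left
    intro i
    obtain ⟨p, hp, hpm⟩ := hlow i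
    exact exists_eq_of_induce_preconnected (hR i) f hf hp (htop i) hpm (hi₀ i)
  · right
    push Not at hlow
    obtain ⟨i, hi⟩ := hlow
    intro j
    obtain ⟨x, hxR, hxC⟩ := hRC i₀ j
    obtain ⟨y, hyR, hyC⟩ := hRC i j
    exact exists_eq_of_induce_preconnected (hC j) f hf hxC hyC (hmax i₀ x hxR) (hi y hyR).le

lemma card_le_card_of_meeting_level {ι β : Type*} [Fintype ι] [Fintype β] {U : ι → Set V}
    (hU : Pairwise (Disjoint on U)) (f : V → ℕ) (g : V → β)
    (hfg : ∀ x y, f x = f y → g x = g y → x = y) {m : ℕ} (hm : ∀ i, ∃ p ∈ U i, f p = m) :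
    Fintype.card ι ≤ Fintype.card β := by
  choose w hwU hwm using hm
  refine Fintype.card_le_of_injective (g ∘ w) fun i i' he => ?_
  by_contra hne
  have hw : w i = w i' := hfg _ _ ((hwm i).trans (hwm i').symm) he
  exact Set.disjoint_left.1 (hU hne) (hwU i) (hw ▸ hwU i')

end Levels

section Grids

variable {α β : Type*} {G : SimpleGraph α} {H : SimpleGraph β}

lemma boxProd_induce_fiber_fst_preconnected (hH : H.Preconnected) (x : α) :
    ((G □ H).induce (Prod.fst ⁻¹' {x})).Preconnected :=
  hH.map ⟨fun y => ⟨(x, y), rfl⟩, fun h => boxProd_adj.2 (Or.inr ⟨h, rfl⟩)⟩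
    (by rintro ⟨⟨x', y⟩, rfl : x' = x⟩; exact ⟨y, rfl⟩)

lemma boxProd_induce_fiber_snd_preconnected (hG : G.Preconnected) (y : β) :
    ((G □ H).induce (Prod.snd ⁻¹' {y})).Preconnected :=
  hG.map ⟨fun x => ⟨(x, y), rfl⟩, fun h => boxProd_adj.2 (Or.inl ⟨h, rfl⟩)⟩
    (by rintro ⟨⟨x, y'⟩, rfl : y' = y⟩; exact ⟨x, rfl⟩)

variable {a b : ℕ}

lemma gridGraph_adj_le {p q : Fin a × Fin b} (h : (gridGraph a b).Adj p q) :
    (q.1 : ℕ) ≤ p.1 + 1 ∧ (q.2 : ℕ) ≤ p.2 + 1 := by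
  rcases boxProd_adj.1 h with ⟨h₁, h₂⟩ | ⟨h₁, h₂⟩ <;>
    simp only [pathGraph_adj, Fin.ext_iff] at h₁ h₂ <;> omega

lemma gridGraph_ncard_straddling_rows_le (A : Set (Fin a × Fin b)) :
    {x | Straddles A (Prod.fst ⁻¹' {x})}.ncard ≤ cutSize (gridGraph a b) A :=
  ncard_straddling_fibers_le_cutSize _
    (boxProd_induce_fiber_fst_preconnected (pathGraph_preconnected b)) A

lemma gridGraph_ncard_straddling_cols_le (A : Set (Fin a × Fin b)) :
    {y | Straddles A (Prod.snd ⁻¹' {y})}.ncard ≤ cutSize (gridGraph a b) A :=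
  ncard_straddling_fibers_le_cutSize _
    (boxProd_induce_fiber_snd_preconnected (pathGraph_preconnected a)) A

end Grids

section Minors

variable {V : Type*} {G : SimpleGraph V} {r : ℕ} {μ : Fin r × Fin r → Set V}

def minorCol (μ : Fin r × Fin r → Set V) (j : Fin r) : Set V :=
  ⋃ i, μ (i, j)

namespace IsMinorMapping

lemma comp_swap (h : IsMinorMapping G (gridGraph r r) μ) :
    IsMinorMapping G (gridGraph r r) (μ ∘ Prod.swap) :=
  ⟨fun _ => h.1 _, fun _ _ hne => h.2.1 (Prod.swap_injective.ne hne), fun _ => h.2.2.1 _,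
    fun _ _ hadj => h.2.2.2 ((boxProdComm _ _).map_adj_iff.2 hadj)⟩

lemma minorCol_preconnected (h : IsMinorMapping G (gridGraph r r) μ) (j : Fin r) :
    (G.induce (minorCol μ j)).Preconnected :=
  induce_iUnion_preconnected (pathGraph_preconnected r) (fun _ => (h.2.2.1 _).preconnected)
    fun _ _ hii' => h.2.2.2 (boxProd_adj.2 (Or.inl ⟨hii', rfl⟩))

lemma pairwise_disjoint_minorCol (h : IsMinorMapping G (gridGraph r r) μ) :
    Pairwise (Disjoint on minorCol μ) := fun _ _ hne =>
  Set.disjoint_iUnion_left.2 fun _ => Set.disjoint_iUnion_right.2 fun _ =>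
    h.2.1 fun he => hne (congrArg Prod.snd he)

lemma ncard_inter_range_le [Finite V] (h : IsMinorMapping G (gridGraph r r) μ) {i₀ : Fin r}
    {q : Fin r → V} (hq : ∀ j, q j ∈ μ (i₀, j)) {B : Set V}
    (hB : B.ncard ≤ cutSize G B ^ 2) :
    (B ∩ Set.range q).ncard ≤ 2 * cutSize G B := by
  set c := cutSize G B
  set inside := {j | q j ∈ B ∧ minorCol μ j ⊆ B}
  set leaving := {j | q j ∈ B ∧ ¬minorCol μ j ⊆ B}
  have hsplit : (B ∩ Set.range q).ncard ≤ inside.ncard + leaving.ncard := by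
    have hsub : B ∩ Set.range q ⊆ q '' (inside ∪ leaving) := by
      rintro _ ⟨hB, j, rfl⟩
      exact ⟨j, (em _).imp (fun h => ⟨hB, h⟩) (fun h => ⟨hB, h⟩), rfl⟩
    exact (Set.ncard_le_ncard hsub).trans <|
      (Set.ncard_image_le (Set.toFinite _)).trans (Set.ncard_union_le _ _)
  have hleaving : leaving.ncard ≤ c :=
    ncard_le_cutSize (h.pairwise_disjoint_minorCol.set_pairwise _)
      (fun j _ => h.minorCol_preconnected j) fun j ⟨hqB, hnot⟩ =>
        ⟨⟨q j, Set.mem_iUnion.2 ⟨i₀, hq j⟩, hqB⟩, Set.not_subset.1 hnot⟩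
  have hinside : inside.ncard ≤ c := by
    have hr : inside.ncard ≤ r := (Set.ncard_le_card _).trans (Nat.card_fin r).le
    choose pt hpt using h.1
    have hmul : inside.ncard * r ≤ B.ncard := by
      rw [show inside.ncard * r = (inside ×ˢ Set.univ).ncard by
        rw [Set.ncard_prod, Set.ncard_univ, Nat.card_fin]]
      refine Set.ncard_le_ncard_of_injOn (fun v => pt v.swap) ?_ ?_
      · rintro ⟨j, i⟩ ⟨⟨-, hj⟩, -⟩
        exact hj (Set.mem_iUnion.2 ⟨i, hpt (i, j)⟩)
      · rintro v - w - he
        by_contra hne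
        have hw : pt v.swap ∈ μ w.swap := by
          rw [show pt v.swap = pt w.swap from he]; exact hpt _
        exact Set.disjoint_left.1 (h.2.1 (Prod.swap_injective.ne hne)) (hpt _) hw
    nlinarith
  omega

end IsMinorMapping

end Minors

namespace IsMinorMapping

variable {a b r : ℕ} {μ : Fin r × Fin r → Set (Fin a × Fin b)}

lemma le_of_gridGraph (h : IsMinorMapping (gridGraph a b) (gridGraph r r) μ) :
    r ≤ a ∧ r ≤ b := by
  rcases Nat.eq_zero_or_pos r with rfl | hr
  · simp
  have : Nonempty (Fin r) := ⟨⟨0, hr⟩⟩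
  have key : ∀ {β : Type} [Fintype β] (f : Fin a × Fin b → ℕ) (g : Fin a × Fin b → β),
      (∀ ⦃x y⦄, (gridGraph a b).Adj x y → f y ≤ f x + 1) →
      (∀ x y, f x = f y → g x = g y → x = y) → r ≤ Fintype.card β := by
    intro β _ f g hf hfg
    obtain ⟨m, hm | hm⟩ := exists_level_meeting_all f hf h.comp_swap.minorCol_preconnected
      h.minorCol_preconnected fun i j =>
        (h.1 (i, j)).mono <| Set.subset_inter (Set.subset_iUnion (fun k => μ (i, k)) j)
          (Set.subset_iUnion (fun k => μ (k, j)) i)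
    · simpa using card_le_card_of_meeting_level h.comp_swap.pairwise_disjoint_minorCol f g hfg hm
    · simpa using card_le_card_of_meeting_level h.pairwise_disjoint_minorCol f g hfg hm
  constructor
  · simpa using key (fun p => p.2) Prod.fst (fun _ _ hxy => (gridGraph_adj_le hxy).2)
      (fun _ _ h₂ h₁ => Prod.ext h₁ (Fin.ext h₂))
  · simpa using key (fun p => p.1) Prod.snd (fun _ _ hxy => (gridGraph_adj_le hxy).1)
      (fun _ _ h₁ h₂ => Prod.ext (Fin.ext h₁) h₂)

end IsMinorMapping

section GridCuts

variable {a b : ℕ}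

lemma gridGraph_ncard_compl_le {A : Set (Fin a × Fin b)} {x₀ : Fin a} {y₀ : Fin b}
    (hA : (x₀, y₀) ∈ A) (hx₀ : ¬Straddles A (Prod.fst ⁻¹' {x₀}))
    (hy₀ : ¬Straddles A (Prod.snd ⁻¹' {y₀})) :
    Aᶜ.ncard ≤ cutSize (gridGraph a b) A ^ 2 := by
  have hsub :
      Aᶜ ⊆ {x | Straddles A (Prod.fst ⁻¹' {x})} ×ˢ {y | Straddles A (Prod.snd ⁻¹' {y})} := by
    intro p hp
    have hrow : (p.1, y₀) ∈ A := by_contra fun hn => hy₀ ⟨⟨_, rfl, hA⟩, ⟨_, rfl, hn⟩⟩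
    have hcol : (x₀, p.2) ∈ A := by_contra fun hn => hx₀ ⟨⟨_, rfl, hA⟩, ⟨_, rfl, hn⟩⟩
    exact ⟨⟨⟨(p.1, y₀), rfl, hrow⟩, ⟨p, rfl, hp⟩⟩, ⟨⟨(x₀, p.2), rfl, hcol⟩, ⟨p, rfl, hp⟩⟩⟩
  calc Aᶜ.ncard ≤ _ := Set.ncard_le_ncard hsub
    _ = _ := Set.ncard_prod
    _ ≤ _ := Nat.mul_le_mul (gridGraph_ncard_straddling_rows_le A)
        (gridGraph_ncard_straddling_cols_le A)
    _ = _ := (sq _).symm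

lemma gridGraph_cut_cases (A : Set (Fin a × Fin b)) :
    a ≤ cutSize (gridGraph a b) A ∨ b ≤ cutSize (gridGraph a b) A ∨
      A.ncard ≤ cutSize (gridGraph a b) A ^ 2 ∨ Aᶜ.ncard ≤ cutSize (gridGraph a b) A ^ 2 := by
  by_cases hrows : ∀ x, Straddles A (Prod.fst ⁻¹' {x})
  · have huniv : {x | Straddles A (Prod.fst ⁻¹' {x})} = Set.univ := Set.eq_univ_of_forall hrows
    left
    simpa [huniv] using gridGraph_ncard_straddling_rows_le A
  by_cases hcols : ∀ y, Straddles A (Prod.snd ⁻¹' {y})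
  · have huniv : {y | Straddles A (Prod.snd ⁻¹' {y})} = Set.univ := Set.eq_univ_of_forall hcols
    right; left
    simpa [huniv] using gridGraph_ncard_straddling_cols_le A
  push Not at hrows hcols
  obtain ⟨x₀, hx₀⟩ := hrows
  obtain ⟨y₀, hy₀⟩ := hcols
  right; right
  by_cases hA : (x₀, y₀) ∈ A
  · exact Or.inr (gridGraph_ncard_compl_le hA hx₀ hy₀)
  · left
    simpa [cutSize_compl] using gridGraph_ncard_compl_le (A := Aᶜ) hA
      (straddles_compl.not.2 hx₀) (straddles_compl.not.2 hy₀)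

end GridCuts

lemma min_ncard_inter_le_cutSize {a b r₁ r₂ : ℕ} (h12 : r₁ ≤ r₂)
    {μ₁ : Fin r₁ × Fin r₁ → Set (Fin a × Fin b)} {μ₂ : Fin r₂ × Fin r₂ → Set (Fin a × Fin b)}
    (h₁ : IsMinorMapping (gridGraph a b) (gridGraph r₁ r₁) μ₁)
    (h₂ : IsMinorMapping (gridGraph a b) (gridGraph r₂ r₂) μ₂) {i₁ : Fin r₁} {i₂ : Fin r₂}
    {q₁ : Fin r₁ → Fin a × Fin b} {q₂ : Fin r₂ → Fin a × Fin b}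
    (hq₁ : ∀ j, q₁ j ∈ μ₁ (i₁, j)) (hq₂ : ∀ j, q₂ j ∈ μ₂ (i₂, j)) (A : Set (Fin a × Fin b)) :
    min (A ∩ (Set.range q₁ ∪ Set.range q₂)).ncard (Aᶜ ∩ (Set.range q₁ ∪ Set.range q₂)).ncard
      ≤ 4 * cutSize (gridGraph a b) A := by
  set W := Set.range q₁ ∪ Set.range q₂
  have hW : W.ncard ≤ 2 * r₂ := by
    have hq₁ := Finite.card_range_le q₁
    have hq₂ := Finite.card_range_le q₂
    rw [Nat.card_coe_set_eq, Nat.card_fin] at hq₁ hq₂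
    have hunion : W.ncard ≤ (Set.range q₁).ncard + (Set.range q₂).ncard :=
      Set.ncard_union_le _ _
    omega
  have hside : ∀ B, B.ncard ≤ cutSize (gridGraph a b) B ^ 2 →
      (B ∩ W).ncard ≤ 4 * cutSize (gridGraph a b) B := fun B hB => by
    rw [Set.inter_union_distrib_left]
    have hB₁ := h₁.ncard_inter_range_le hq₁ hB
    have hB₂ := h₂.ncard_inter_range_le hq₂ hB
    have hunion := Set.ncard_union_le (B ∩ Set.range q₁) (B ∩ Set.range q₂)
    omega
  have hle : ∀ B, (B ∩ W).ncard ≤ 2 * r₂ := fun B =>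
    (Set.ncard_le_ncard Set.inter_subset_right).trans hW
  obtain ⟨hra, hrb⟩ := h₂.le_of_gridGraph
  rcases gridGraph_cut_cases A with hA | hA | hA | hA
  · exact (min_le_left _ _).trans (by have := hle A; omega)
  · exact (min_le_left _ _).trans (by have := hle A; omega)
  · exact (min_le_left _ _).trans (hside A hA)
  · rw [← cutSize_compl] at hA ⊢
    exact (min_le_right _ _).trans (hside Aᶜ hA)

lemma setOf_fst_val_eq_zero_eq_range {X : Type*} {r : ℕ} (hr : 0 < r)
    (q : Fin r × Fin r → X) :
    {p | ∃ v : Fin r × Fin r, (v.1 : ℕ) = 0 ∧ q v = p} = Set.range fun j => q (⟨0, hr⟩, j) := by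
  ext p
  constructor
  · rintro ⟨⟨i, j⟩, hi, rfl⟩
    exact ⟨j, by rw [show i = ⟨0, hr⟩ from Fin.ext hi]⟩
  · rintro ⟨j, rfl⟩
    exact ⟨_, rfl, rfl⟩

theorem stmt5_general (a b r₁ r₂ : ℕ)
    (hr₁ : 1 ≤ r₁) (h12 : r₁ ≤ r₂)
    (μ₁ : Fin r₁ × Fin r₁ → Set (Fin a × Fin b))
    (μ₂ : Fin r₂ × Fin r₂ → Set (Fin a × Fin b))
    (h₁ : IsMinorMapping (gridGraph a b) (gridGraph r₁ r₁) μ₁)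
    (h₂ : IsMinorMapping (gridGraph a b) (gridGraph r₂ r₂) μ₂)
    (q₁ : Fin r₁ × Fin r₁ → Fin a × Fin b)
    (q₂ : Fin r₂ × Fin r₂ → Fin a × Fin b)
    (hq₁ : ∀ v, (v.1 : ℕ) = 0 → q₁ v ∈ μ₁ v)
    (hq₂ : ∀ v, (v.1 : ℕ) = 0 → q₂ v ∈ μ₂ v) :
    CutLinked (gridGraph a b) (1 / 384)
      ({p | ∃ v : Fin r₁ × Fin r₁, (v.1 : ℕ) = 0 ∧ q₁ v = p} ∪
       {p | ∃ v : Fin r₂ × Fin r₂, (v.1 : ℕ) = 0 ∧ q₂ v = p}) := by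
  intro A
  have hr₂ : 0 < r₂ := hr₁.trans h12
  rw [setOf_fst_val_eq_zero_eq_range hr₁, setOf_fst_val_eq_zero_eq_range hr₂]
  have hmin := min_ncard_inter_le_cutSize h12 h₁ h₂ (fun j => hq₁ (⟨0, hr₁⟩, j) rfl)
    (fun j => hq₂ (⟨0, hr₂⟩, j) rfl) A
  rw [one_div, inv_mul_le_iff₀ (by norm_num)]
  exact_mod_cast hmin.trans (by omega)

/-- Linking two grid minors in a grid: if `Z₁`, `Z₂` are vertex-disjoint grid minors of
a grid `Γ`, and `Wᵢ` consists of one representative from the branch set of each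
first-row vertex of `Zᵢ`, then `W₁ ∪ W₂` is `(1/384)`-cut-linked in `Γ`. -/
theorem stmt5 (a b r₁ r₂ : ℕ) (ha : 1 ≤ a) (hb : 1 ≤ b)
    (hr₁ : 1 ≤ r₁) (h12 : r₁ ≤ r₂)
    (μ₁ : Fin r₁ × Fin r₁ → Set (Fin a × Fin b))
    (μ₂ : Fin r₂ × Fin r₂ → Set (Fin a × Fin b))
    (h₁ : IsMinorMapping (gridGraph a b) (gridGraph r₁ r₁) μ₁)
    (h₂ : IsMinorMapping (gridGraph a b) (gridGraph r₂ r₂) μ₂)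
    (hdisj : (⋃ v, μ₁ v) ∩ (⋃ v, μ₂ v) = ∅)
    (q₁ : Fin r₁ × Fin r₁ → Fin a × Fin b)
    (q₂ : Fin r₂ × Fin r₂ → Fin a × Fin b)
    (hq₁ : ∀ v, (v.1 : ℕ) = 0 → q₁ v ∈ μ₁ v)
    (hq₂ : ∀ v, (v.1 : ℕ) = 0 → q₂ v ∈ μ₂ v) :
    CutLinked (gridGraph a b) (1 / 384)
      ({p | ∃ v : Fin r₁ × Fin r₁, (v.1 : ℕ) = 0 ∧ q₁ v = p} ∪
       {p | ∃ v : Fin r₂ × Fin r₂, (v.1 : ℕ) = 0 ∧ q₂ v = p}) :=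
  stmt5_general a b r₁ r₂ hr₁ h12 μ₁ μ₂ h₁ h₂ q₁ q₂ hq₁ hq₂
end

section
/- Let G be a finite graph and let H be a minor of G of maximum degree Δ with minor mapping μ : V(H) → 2^{V(G)}. Let X ⊆ V(H) be a set that is α-cut-linked in H, for some α > 0. For each x ∈ X pick some q(x) ∈ μ(x). Then the set { q(x) : x ∈ X } is (α/Δ)-cut-linked in G. -/
lemma crossWalk {V : Type*} (G : SimpleGraph V) (s A : Set V) :
    ∀ {x y : s}, (G.induce s).Walk x y → (x : V) ∈ A → (y : V) ∉ A →
      ∃ u ∈ s ∩ A, ∃ v ∈ s ∩ Aᶜ, G.Adj u v := by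
  intro x y p
  induction p with
  | nil => exact fun h h' => absurd h h'
  | @cons x z y h p ih =>
    intro hx hy
    by_cases hz : (z : V) ∈ A
    · exact ih hz hy
    · exact ⟨x, ⟨x.2, hx⟩, z, ⟨z.2, hz⟩, h⟩

lemma crossConn {V : Type*} (G : SimpleGraph V) {s : Set V}
    (hconn : (G.induce s).Connected) (A : Set V) {a b : V}
    (ha : a ∈ s) (hb : b ∈ s) (haA : a ∈ A) (hbA : b ∉ A) :
    ∃ u ∈ s ∩ A, ∃ v ∈ s ∩ Aᶜ, G.Adj u v := by
  obtain ⟨p⟩ := hconn.preconnected ⟨a, ha⟩ ⟨b, hb⟩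
  exact crossWalk G s A p haA hbA

lemma countingLemma {β γ : Type*} [Fintype β] [Fintype γ]
    (s : Set β) (t : Set γ) (n : ℕ) (R : β → γ → Prop)
    (hex : ∀ e ∈ s, ∃ g ∈ t, R e g)
    (hfib : ∀ g ∈ t, {e ∈ s | R e g}.ncard ≤ n) :
    s.ncard ≤ n * t.ncard := by
  classical
  rcases s.eq_empty_or_nonempty with rfl | ⟨e₀, he₀⟩
  · simp
  obtain ⟨g₀, _, _⟩ := hex e₀ he₀
  set f : β → γ := fun e =>
    if h : e ∈ s then (Classical.indefiniteDescription _ (hex e h)).1 else g₀ with hf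
  have hmem : ∀ e ∈ s, f e ∈ t ∧ R e (f e) := by
    intro e he
    simp only [hf, dif_pos he]
    exact (Classical.indefiniteDescription _ (hex e he)).2
  have key : s.toFinset.card ≤ n * t.toFinset.card := by
    apply Finset.card_le_mul_card_image_of_maps_to
      (f := f) (fun a ha => by
        rw [Set.mem_toFinset] at ha ⊢; exact (hmem a ha).1)
    intro b hb
    rw [Set.mem_toFinset] at hb
    calc ({a ∈ s.toFinset | f a = b}).card
        ≤ ({e ∈ s | R e b}).toFinset.card := by
          apply Finset.card_le_card
          intro a ha
          simp only [Finset.mem_filter, Set.mem_toFinset] at ha ⊢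
          obtain ⟨has, hfa⟩ := ha
          exact ⟨has, hfa ▸ (hmem a has).2⟩
      _ ≤ n := by rw [← Set.ncard_eq_toFinset_card']; exact hfib b hb
  rwa [Set.ncard_eq_toFinset_card', Set.ncard_eq_toFinset_card' t]

/-- If `H` is a minor of `G` of maximum degree `Δ`, `X ⊆ V(H)` is `α`-cut-linked in `H`,
and `q` picks one representative from each branch set, then `q '' X` is
`(α/Δ)`-cut-linked in `G`. -/
theorem stmt6 {V W : Type*} [Fintype V] [Fintype W]
    (G : SimpleGraph V) (H : SimpleGraph W) (Δ : ℕ)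
    (hdeg : ∀ w : W, (H.neighborSet w).ncard ≤ Δ)
    (μ : W → Set V) (hμ : IsMinorMapping G H μ)
    (α : ℝ) (hα : 0 < α) (X : Set W) (hX : CutLinked H α X)
    (q : W → V) (hq : ∀ x ∈ X, q x ∈ μ x) :
    CutLinked G (α / (Δ : ℝ)) (q '' X) := by
  classical
  intro A
  obtain ⟨hne, hdisj, hconn, hadj⟩ := hμ
  rcases Nat.eq_zero_or_pos Δ with hΔ0 | hΔpos
  · subst hΔ0
    simp only [Nat.cast_zero, div_zero, zero_mul]
    positivity
  have huniq : ∀ {z : V} {w w' : W}, z ∈ μ w → z ∈ μ w' → w = w' := by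
    intro z w w' hz hz'
    by_contra hne'
    exact Set.disjoint_left.mp (hdisj hne') hz hz'
  have hinj : Set.InjOn q X := by
    intro x hx y hy hxy
    exact huniq (hq x hx) (hxy ▸ hq y hy)
  set B : Set W := {w | (w ∈ X ∧ q w ∈ A) ∨ (w ∉ X ∧ (μ w ∩ A).Nonempty)} with hB
  -- cardinality identities
  have h1 : A ∩ q '' X = q '' {x ∈ X | q x ∈ A} := by
    ext v
    constructor
    · rintro ⟨hvA, x, hxX, rfl⟩
      exact ⟨x, ⟨hxX, hvA⟩, rfl⟩
    · rintro ⟨x, ⟨hxX, hA⟩, rfl⟩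
      exact ⟨hA, x, hxX, rfl⟩
  have h2 : Aᶜ ∩ q '' X = q '' {x ∈ X | q x ∉ A} := by
    ext v
    constructor
    · rintro ⟨hvA, x, hxX, rfl⟩
      exact ⟨x, ⟨hxX, hvA⟩, rfl⟩
    · rintro ⟨x, ⟨hxX, hA⟩, rfl⟩
      exact ⟨hA, x, hxX, rfl⟩
  have hBX : B ∩ X = {x ∈ X | q x ∈ A} := by
    ext w
    constructor
    · rintro ⟨hwB, hwX⟩
      rcases hwB with ⟨_, h⟩ | ⟨hnX, _⟩
      · exact ⟨hwX, h⟩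
      · exact absurd hwX hnX
    · rintro ⟨hwX, h⟩
      exact ⟨Or.inl ⟨hwX, h⟩, hwX⟩
  have hBcX : Bᶜ ∩ X = {x ∈ X | q x ∉ A} := by
    ext w
    constructor
    · rintro ⟨hwB, hwX⟩
      refine ⟨hwX, fun h => hwB (Or.inl ⟨hwX, h⟩)⟩
    · rintro ⟨hwX, h⟩
      refine ⟨fun hB' => ?_, hwX⟩
      rcases hB' with ⟨_, h'⟩ | ⟨hnX, _⟩
      · exact h h'
      · exact hnX hwX
  have hc1 : (A ∩ q '' X).ncard = (B ∩ X).ncard := by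
    rw [h1, hBX, Set.ncard_image_of_injOn (hinj.mono (Set.sep_subset _ _))]
  have hc2 : (Aᶜ ∩ q '' X).ncard = (Bᶜ ∩ X).ncard := by
    rw [h2, hBcX, Set.ncard_image_of_injOn (hinj.mono (Set.sep_subset _ _))]
  -- the key counting inequality
  have hcount : cutSize H B ≤ Δ * cutSize G A := by
    unfold cutSize
    apply countingLemma _ _ _
      (fun e g =>
        (∃ w, w ∈ e ∧ ∃ u v, g = s(u, v) ∧ u ∈ μ w ∧ v ∈ μ w) ∨
        (∃ w w', e = s(w, w') ∧ ∃ u v, g = s(u, v) ∧ u ∈ μ w ∧ v ∈ μ w'))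
    · -- existence
      rintro e ⟨heE, w, hw, w', hw', rfl⟩
      have hadjww' : H.Adj w w' := H.mem_edgeSet.mp heE
      obtain ⟨u, hu, v, hv, huv⟩ := hadj hadjww'
      have hAw : (μ w ∩ A).Nonempty := by
        rcases hw with ⟨hwX, hqA⟩ | ⟨_, h⟩
        · exact ⟨q w, hq w hwX, hqA⟩
        · exact h
      have hAcw' : (μ w' ∩ Aᶜ).Nonempty := by
        by_cases hw'X : w' ∈ X
        · exact ⟨q w', hq w' hw'X, fun h => hw' (Or.inl ⟨hw'X, h⟩)⟩
        · obtain ⟨z, hz⟩ := hne w'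
          refine ⟨z, hz, fun h => hw' (Or.inr ⟨hw'X, ⟨z, hz, h⟩⟩)⟩
      by_cases huA : u ∈ A
      · by_cases hvA : v ∈ A
        · -- internal crossing inside μ w'
          obtain ⟨z, hz, hzA⟩ := hAcw'
          obtain ⟨u', hu', v', hv', h'⟩ := crossConn G (hconn w') A hv hz hvA hzA
          exact ⟨s(u', v'), ⟨G.mem_edgeSet.mpr h', u', hu'.2, v', hv'.2, rfl⟩,
            Or.inl ⟨w', Sym2.mem_mk_right w w', u', v', rfl, hu'.1, hv'.1⟩⟩
        · exact ⟨s(u, v), ⟨G.mem_edgeSet.mpr huv, u, huA, v, hvA, rfl⟩,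
            Or.inr ⟨w, w', rfl, u, v, rfl, hu, hv⟩⟩
      · -- internal crossing inside μ w
        obtain ⟨z, hz, hzA⟩ := hAw
        obtain ⟨u', hu', v', hv', h'⟩ := crossConn G (hconn w) A hz hu hzA huA
        exact ⟨s(u', v'), ⟨G.mem_edgeSet.mpr h', u', hu'.2, v', hv'.2, rfl⟩,
          Or.inl ⟨w, Sym2.mem_mk_left w w', u', v', rfl, hu'.1, hv'.1⟩⟩
    · -- fiber bound
      rintro g ⟨hgE, u₀, hu₀A, v₀, hv₀A, rfl⟩
      by_cases hint : ∃ w₀, u₀ ∈ μ w₀ ∧ v₀ ∈ μ w₀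
      · obtain ⟨w₀, hw₀u, hw₀v⟩ := hint
        have hsub : {e ∈ {e : Sym2 W | e ∈ H.edgeSet ∧ ∃ u ∈ B, ∃ v ∈ Bᶜ, e = s(u, v)} |
            (∃ w, w ∈ e ∧ ∃ u v, s(u₀, v₀) = s(u, v) ∧ u ∈ μ w ∧ v ∈ μ w) ∨
            (∃ w w', e = s(w, w') ∧ ∃ u v, s(u₀, v₀) = s(u, v) ∧ u ∈ μ w ∧ v ∈ μ w')} ⊆
            H.incidenceSet w₀ := by
          rintro e ⟨⟨heE, _⟩, hR⟩
          rcases hR with ⟨w, hwe, u, v, hguv, hu, hv⟩ | ⟨w, w', rfl, u, v, hguv, hu, hv⟩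
          · have hu₀w : u₀ ∈ μ w := by
              rcases Sym2.eq_iff.mp hguv with ⟨rfl, rfl⟩ | ⟨rfl, rfl⟩
              · exact hu
              · exact hv
            exact ⟨heE, huniq hu₀w hw₀u ▸ hwe⟩
          · exfalso
            have hww' : w ≠ w' := (H.mem_edgeSet.mp heE).ne
            rcases Sym2.eq_iff.mp hguv with ⟨rfl, rfl⟩ | ⟨rfl, rfl⟩
            · exact hww' ((huniq hu hw₀u).trans (huniq hw₀v hv))
            · exact hww' ((huniq hv hw₀u).trans (huniq hw₀v hu)).symm
        calc _ ≤ (H.incidenceSet w₀).ncard := Set.ncard_le_ncard hsub (Set.toFinite _)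
          _ = (H.neighborSet w₀).ncard :=
            Nat.card_congr (H.incidenceSetEquivNeighborSet w₀)
          _ ≤ Δ := hdeg w₀
      · have hform : ∀ e ∈ {e ∈ {e : Sym2 W | e ∈ H.edgeSet ∧ ∃ u ∈ B, ∃ v ∈ Bᶜ, e = s(u, v)} |
            (∃ w, w ∈ e ∧ ∃ u v, s(u₀, v₀) = s(u, v) ∧ u ∈ μ w ∧ v ∈ μ w) ∨
            (∃ w w', e = s(w, w') ∧ ∃ u v, s(u₀, v₀) = s(u, v) ∧ u ∈ μ w ∧ v ∈ μ w')},
            ∃ a b, e = s(a, b) ∧ u₀ ∈ μ a ∧ v₀ ∈ μ b := by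
          rintro e ⟨⟨heE, _⟩, hR⟩
          rcases hR with ⟨w, hwe, u, v, hguv, hu, hv⟩ | ⟨w, w', rfl, u, v, hguv, hu, hv⟩
          · exfalso
            rcases Sym2.eq_iff.mp hguv with ⟨rfl, rfl⟩ | ⟨rfl, rfl⟩
            · exact hint ⟨w, hu, hv⟩
            · exact hint ⟨w, hv, hu⟩
          · rcases Sym2.eq_iff.mp hguv with ⟨rfl, rfl⟩ | ⟨rfl, rfl⟩
            · exact ⟨w, w', rfl, hu, hv⟩
            · exact ⟨w', w, Sym2.eq_swap, hv, hu⟩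
        refine le_trans ((Set.ncard_le_one_iff (Set.toFinite _)).mpr ?_) hΔpos
        intro e₁ e₂ h₁ h₂
        obtain ⟨a₁, b₁, rfl, ha₁, hb₁⟩ := hform e₁ h₁
        obtain ⟨a₂, b₂, rfl, ha₂, hb₂⟩ := hform e₂ h₂
        rw [huniq ha₁ ha₂, huniq hb₁ hb₂]
  -- combine
  have hHB := hX B
  have hmineq : min ((A ∩ q '' X).ncard) ((Aᶜ ∩ q '' X).ncard)
      = min ((B ∩ X).ncard) ((Bᶜ ∩ X).ncard) := by rw [hc1, hc2]
  have hΔR : (0 : ℝ) < (Δ : ℝ) := by exact_mod_cast hΔpos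
  rw [div_mul_eq_mul_div, div_le_iff₀ hΔR]
  calc α * (min ((A ∩ q '' X).ncard) ((Aᶜ ∩ q '' X).ncard) : ℕ)
      = α * (min ((B ∩ X).ncard) ((Bᶜ ∩ X).ncard) : ℕ) := by rw [hmineq]
    _ ≤ (cutSize H B : ℝ) := hHB
    _ ≤ ((Δ * cutSize G A : ℕ) : ℝ) := by exact_mod_cast hcount
    _ = (cutSize G A : ℝ) * (Δ : ℝ) := by push_cast; ring
end

section
/- Let G be a finite graph and let X, Y ⊆ V(G). Suppose that X is α-cut-linked in G for some α > 0, and suppose that there exists a collection 𝒬 of pairwise vertex-disjoint paths in G, each with one endpoint in X and the other endpoint in Y, with |𝒬| = |Y|. Then Y is min{1/2, α/2}-cut-linked in G. -/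
namespace SimpleGraph

variable {V ι : Type*} {G : SimpleGraph V}

def cutEdgeSet (G : SimpleGraph V) (A : Set V) : Set (Sym2 V) :=
  {e | e ∈ G.edgeSet ∧ ∃ u ∈ A, ∃ v ∈ Aᶜ, e = s(u, v)}

theorem cutSize_eq_ncard_cutEdgeSet (A : Set V) : cutSize G A = (G.cutEdgeSet A).ncard := rfl

theorem Dart.edge_mem_cutEdgeSet {A : Set V} (d : G.Dart) (hfst : d.fst ∈ A) (hsnd : d.snd ∉ A) :
    d.edge ∈ G.cutEdgeSet A :=
  ⟨d.edge_mem, d.fst, hfst, d.snd, hsnd, rfl⟩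

theorem Walk.exists_mem_edges_mem_cutEdgeSet {u v : V} {A : Set V} (p : G.Walk u v)
    (huv : ¬(u ∈ A ↔ v ∈ A)) : ∃ e ∈ p.edges, e ∈ G.cutEdgeSet A := by
  by_cases hu : u ∈ A
  · obtain ⟨d, hd, hfst, hsnd⟩ := p.exists_boundary_dart A hu (fun hv ↦ huv (iff_of_true hu hv))
    exact ⟨d.edge, List.mem_map_of_mem hd, d.edge_mem_cutEdgeSet hfst hsnd⟩
  · have hv : v ∈ A := by tauto
    obtain ⟨d, hd, hfst, hsnd⟩ := p.exists_boundary_dart Aᶜ hu (not_not.mpr hv)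
    exact ⟨d.edge, List.mem_map_of_mem hd,
      d.edge_symm ▸ d.symm.edge_mem_cutEdgeSet (not_not.mp hsnd) hfst⟩

theorem injective_of_mem_support {a b : ι → V} {p : ∀ j, G.Walk (a j) (b j)}
    (hdisj : Pairwise fun j k ↦ (p j).support.Disjoint (p k).support) {f : ι → V}
    (hf : ∀ j, f j ∈ (p j).support) : Function.Injective f := by
  intro j k hjk
  by_contra hne
  exact hdisj hne (hf j) (hjk ▸ hf k)

theorem ncard_separated_le_cutSize [Finite V] {a b : ι → V} {p : ∀ j, G.Walk (a j) (b j)}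
    (hdisj : Pairwise fun j k ↦ (p j).support.Disjoint (p k).support) (A : Set V) :
    {j | ¬(a j ∈ A ↔ b j ∈ A)}.ncard ≤ cutSize G A := by
  have hedge : ∀ j, ∃ e, ¬(a j ∈ A ↔ b j ∈ A) → e ∈ (p j).edges ∧ e ∈ G.cutEdgeSet A := by
    intro j
    by_cases hj : a j ∈ A ↔ b j ∈ A
    · exact ⟨s(a j, a j), fun h ↦ absurd hj h⟩
    · obtain ⟨e, he, hcut⟩ := (p j).exists_mem_edges_mem_cutEdgeSet hj
      exact ⟨e, fun _ ↦ ⟨he, hcut⟩⟩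
  choose e he using hedge
  rw [cutSize_eq_ncard_cutEdgeSet]
  refine Set.ncard_le_ncard_of_injOn e (fun j hj ↦ (he j hj).2) ?_ (Set.toFinite _)
  intro j hj k hk hjk
  by_contra hne
  have hmem (i : ι) (hi : ¬(a i ∈ A ↔ b i ∈ A)) : (e i).out.1 ∈ (p i).support :=
    Walk.mem_support_of_mem_edges (he i hi).1 (e i).out_fst_mem
  exact hdisj hne (hmem j hj) (hjk ▸ hmem k hk)

end SimpleGraph

theorem Set.ncard_inter_le_add_ncard_separated {V ι : Type*} [Finite V] {X Y : Set V}
    {a b : ι → V} (ha : Function.Injective a) (haX : ∀ j, a j ∈ X) (hY : Y ⊆ Set.range b)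
    (S : Set V) :
    (S ∩ Y).ncard ≤ (S ∩ X).ncard + {j | ¬(a j ∈ S ↔ b j ∈ S)}.ncard := by
  have : Finite ι := Finite.of_injective a ha
  calc (S ∩ Y).ncard ≤ (b '' {j | b j ∈ S}).ncard := by
        refine Set.ncard_le_ncard ?_ (Set.toFinite _)
        rintro v ⟨hvS, hvY⟩
        obtain ⟨j, rfl⟩ := hY hvY
        exact ⟨j, hvS, rfl⟩
    _ ≤ {j | b j ∈ S}.ncard := Set.ncard_image_le (Set.toFinite _)
    _ ≤ ({j | a j ∈ S} ∪ {j | ¬(a j ∈ S ↔ b j ∈ S)}).ncard := by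
        refine Set.ncard_le_ncard (fun j hj ↦ ?_) (Set.toFinite _)
        by_cases h : a j ∈ S
        · exact Or.inl h
        · exact Or.inr fun hiff ↦ h (hiff.mpr hj)
    _ ≤ {j | a j ∈ S}.ncard + {j | ¬(a j ∈ S ↔ b j ∈ S)}.ncard := Set.ncard_union_le _ _
    _ ≤ (S ∩ X).ncard + {j | ¬(a j ∈ S ↔ b j ∈ S)}.ncard := by
        gcongr
        exact Set.ncard_le_ncard_of_injOn a (fun j hj ↦ ⟨hj, haX j⟩) ha.injOn

theorem min_half_mul_le_of_le_add {α x y c : ℝ} (hα : 0 ≤ α) (hx : 0 ≤ x) (hc : 0 ≤ c)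
    (hy : y ≤ x + c) (hαx : α * x ≤ c) : min (1 / 2) (α / 2) * y ≤ c :=
  calc min (1 / 2) (α / 2) * y ≤ min (1 / 2) (α / 2) * (x + c) := by gcongr
    _ ≤ α / 2 * x + 1 / 2 * c := by
      rw [mul_add]; gcongr <;> first | exact min_le_right _ _ | exact min_le_left _ _
    _ ≤ c := by linarith

/-- If `X` is `α`-cut-linked in `G` and there is a collection of `|Y|` pairwise
vertex-disjoint paths in `G`, each with one endpoint in `X` and the other in `Y`,
then `Y` is `min(1/2, α/2)`-cut-linked in `G`. -/
theorem stmt7 {V : Type*} [Fintype V] (G : SimpleGraph V) (X Y : Set V)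
    (α : ℝ) (hα : 0 < α) (hX : CutLinked G α X)
    (hpaths : ∃ (a b : Fin (Y.ncard) → V) (p : ∀ j, G.Walk (a j) (b j)),
      (∀ j, a j ∈ X) ∧ (∀ j, b j ∈ Y) ∧ (∀ j, (p j).IsPath) ∧
      (∀ j k, j ≠ k → List.Disjoint (p j).support (p k).support)) :
    CutLinked G (min (1 / 2) (α / 2)) Y := by
  obtain ⟨a, b, p, haX, hbY, -, hdisj⟩ := hpaths
  have ha := SimpleGraph.injective_of_mem_support hdisj fun j ↦ (p j).start_mem_support
  have hb := SimpleGraph.injective_of_mem_support hdisj fun j ↦ (p j).end_mem_support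
  have hY : Y ⊆ Set.range b := by
    refine (Set.eq_of_subset_of_ncard_le (Set.range_subset_iff.mpr hbY) ?_).symm.subset
    rw [Set.ncard_range_of_injective hb, Nat.card_eq_fintype_card, Fintype.card_fin]
  intro A
  have hcut := SimpleGraph.ncard_separated_le_cutSize hdisj A
  have hA := Set.ncard_inter_le_add_ncard_separated ha haX hY A
  have hAc := Set.ncard_inter_le_add_ncard_separated ha haX hY Aᶜ
  simp only [Set.mem_compl_iff, not_iff_not] at hAc
  refine min_half_mul_le_of_le_add hα.le (Nat.cast_nonneg _) (Nat.cast_nonneg _) ?_ (hX A)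
  exact_mod_cast (by omega : min (A ∩ Y).ncard (Aᶜ ∩ Y).ncard ≤
    min (A ∩ X).ncard (Aᶜ ∩ X).ncard + cutSize G A)
end

section
/- For every integer r ≥ 2 there exists a probability distribution 𝒟 over sparse subsets I ⊆ {1, …, r−1} such that for all x, y ∈ {1, …, r−1} with |x − y| ≥ 4 and {x, y} ≠ {1, r−1}, the probability that a random I drawn from 𝒟 contains both x and y is at least 1/182. -/
open scoped ENNReal NNReal


/-- A subset `I ⊆ {1, …, r−1}` is sparse if distinct elements are at distance at least
`4` and `I` contains at most one of the two elements `1` and `r−1`. -/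
def SparseSet (r : ℕ) (I : Finset ℕ) : Prop :=
  I ⊆ Finset.Icc 1 (r - 1) ∧
  (∀ i ∈ I, ∀ j ∈ I, i ≠ j → 4 ≤ |(i : ℤ) - (j : ℤ)|) ∧
  (({1, r - 1} : Finset ℕ) ∩ I).card ≤ 1


/-- extend a function on `Fin r` to ℕ. -/
def extg (r : ℕ) (g : Fin r → Fin 4) (n : ℕ) : ℕ :=
  if h : n < r then (g ⟨n, h⟩ : ℕ) else 0

/-- the random pre-set: one point in each length-7 block (offset `t`),
at position `< 4` within the block, chosen by `g`. -/
def preI (r : ℕ) (t : Fin 7) (g : Fin r → Fin 4) : Finset ℕ :=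
  (Finset.Icc 1 (r - 1)).filter fun i =>
    (i + (t : ℕ)) % 7 < 4 ∧ extg r g ((i + (t : ℕ)) / 7) = (i + (t : ℕ)) % 7

def fset (r : ℕ) (ω : Fin 7 × (Fin r → Fin 4)) : Finset ℕ :=
  if 1 ∈ preI r ω.1 ω.2 then (preI r ω.1 ω.2).erase (r - 1) else preI r ω.1 ω.2

lemma mem_preI {r : ℕ} {t : Fin 7} {g : Fin r → Fin 4} {i : ℕ} :
    i ∈ preI r t g ↔ i ∈ Finset.Icc 1 (r - 1) ∧
      (i + (t : ℕ)) % 7 < 4 ∧ extg r g ((i + (t : ℕ)) / 7) = (i + (t : ℕ)) % 7 := by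
  simp [preI]

lemma preI_gap {r : ℕ} {t : Fin 7} {g : Fin r → Fin 4} {i j : ℕ}
    (hi : i ∈ preI r t g) (hj : j ∈ preI r t g) (hij : i < j) : i + 4 ≤ j := by
  rw [mem_preI] at hi hj
  obtain ⟨-, hi1, hi2⟩ := hi
  obtain ⟨-, hj1, hj2⟩ := hj
  set a := i + (t : ℕ) with ha
  set b := j + (t : ℕ) with hb
  have hab : a < b := by omega
  have hdiv : a / 7 < b / 7 := by
    rcases lt_or_ge (a / 7) (b / 7) with h | h
    · exact h
    have h' : b / 7 ≤ a / 7 := h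
    have h'' : a / 7 ≤ b / 7 := Nat.div_le_div_right hab.le
    have heq : a / 7 = b / 7 := le_antisymm h'' h'
    have : a % 7 = b % 7 := by rw [← hi2, ← hj2, heq]
    omega
  have h1 := Nat.div_add_mod a 7
  have h2 := Nat.div_add_mod b 7
  omega

lemma fset_sparse (r : ℕ) (ω : Fin 7 × (Fin r → Fin 4)) : SparseSet r (fset r ω) := by
  have hsub : fset r ω ⊆ preI r ω.1 ω.2 := by
    unfold fset; split
    · exact Finset.erase_subset _ _
    · exact Finset.Subset.refl _
  refine ⟨?_, ?_, ?_⟩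
  · intro i hi
    exact (mem_preI.1 (hsub hi)).1
  · intro i hi j hj hne
    have hi' := hsub hi
    have hj' := hsub hj
    rcases Nat.lt_or_ge i j with h | h'
    · have := preI_gap hi' hj' h
      have h2 : (i : ℤ) + 4 ≤ j := by exact_mod_cast this
      rw [abs_sub_comm, abs_of_nonneg (by omega : (0:ℤ) ≤ (j:ℤ) - i)]
      omega
    · have h : j < i := by omega
      have := preI_gap hj' hi' h
      have h2 : (j : ℤ) + 4 ≤ i := by exact_mod_cast this
      rw [abs_of_nonneg (by omega : (0:ℤ) ≤ (i:ℤ) - j)]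
      omega
  · unfold fset
    split
    · next h1 =>
      have : ({1, r - 1} : Finset ℕ) ∩ (preI r ω.1 ω.2).erase (r - 1) ⊆ {1} := by
        intro z hz
        rw [Finset.mem_inter] at hz
        rcases Finset.mem_insert.1 hz.1 with h | h
        · simpa using h
        · exact absurd (Finset.mem_erase.1 hz.2).1 (by simp [Finset.mem_singleton.1 h])
      calc _ ≤ ({1} : Finset ℕ).card := Finset.card_le_card this
        _ ≤ 1 := by simp
    · next h1 =>
      have : ({1, r - 1} : Finset ℕ) ∩ preI r ω.1 ω.2 ⊆ {r - 1} := by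
        intro z hz
        rw [Finset.mem_inter] at hz
        rcases Finset.mem_insert.1 hz.1 with h | h
        · exact absurd (h ▸ hz.2) h1
        · exact Finset.mem_singleton.2 (Finset.mem_singleton.1 h)
      calc _ ≤ ({r - 1} : Finset ℕ).card := Finset.card_le_card this
        _ ≤ 1 := by simp


lemma card_cyl (r : ℕ) (K₁ K₂ K₃ : Fin r) (h12 : K₁ ≠ K₂) (h13 : K₁ ≠ K₃) (h23 : K₂ ≠ K₃)
    (U₁ U₂ W : Fin 4) :
    (Fintype.piFinset fun k => if k = K₁ then {U₁} else if k = K₂ then ({U₂} : Finset (Fin 4))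
      else if k = K₃ then Finset.univ.erase W else Finset.univ).card = 3 * 4 ^ (r - 3) := by
  rw [Fintype.card_piFinset]
  set c : Fin r → ℕ := fun k => ((if k = K₁ then {U₁} else if k = K₂ then ({U₂} : Finset (Fin 4))
      else if k = K₃ then Finset.univ.erase W else Finset.univ).card) with hc
  have m1 : K₁ ∈ (Finset.univ : Finset (Fin r)) := Finset.mem_univ _
  have m2 : K₂ ∈ (Finset.univ : Finset (Fin r)).erase K₁ :=
    Finset.mem_erase.2 ⟨h12.symm, Finset.mem_univ _⟩
  have m3 : K₃ ∈ ((Finset.univ : Finset (Fin r)).erase K₁).erase K₂ :=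
    Finset.mem_erase.2 ⟨h23.symm, Finset.mem_erase.2 ⟨h13.symm, Finset.mem_univ _⟩⟩
  rw [← Finset.mul_prod_erase _ c m1, ← Finset.mul_prod_erase _ c m2,
    ← Finset.mul_prod_erase _ c m3]
  have e1 : c K₁ = 1 := by simp [hc]
  have e2 : c K₂ = 1 := by simp [hc, h12.symm]
  have e3 : c K₃ = 3 := by
    simp only [hc, if_neg h13.symm, if_neg h23.symm, if_pos rfl, if_true]
    rw [Finset.card_erase_of_mem (Finset.mem_univ _), Finset.card_univ, Fintype.card_fin]
  have e4 : ∏ k ∈ (((Finset.univ : Finset (Fin r)).erase K₁).erase K₂).erase K₃, c k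
      = 4 ^ (r - 3) := by
    have hcongr : ∀ k ∈ (((Finset.univ : Finset (Fin r)).erase K₁).erase K₂).erase K₃,
        c k = 4 := by
      intro k hk
      have hk3 := (Finset.mem_erase.1 hk).1
      have hk2 := (Finset.mem_erase.1 (Finset.mem_erase.1 hk).2).1
      have hk1 := (Finset.mem_erase.1 (Finset.mem_erase.1 (Finset.mem_erase.1 hk).2).2).1
      simp [hc, hk1, hk2, hk3]
    rw [Finset.prod_congr rfl hcongr, Finset.prod_const]
    congr 1
    rw [Finset.card_erase_of_mem m3, Finset.card_erase_of_mem m2,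
      Finset.card_erase_of_mem m1, Finset.card_univ, Fintype.card_fin]
    omega
  rw [e1, e2, e3, e4]
  ring

lemma three_le {r : ℕ} (K₁ K₂ K₃ : Fin r) (h12 : K₁ ≠ K₂) (h13 : K₁ ≠ K₃) (h23 : K₂ ≠ K₃) :
    3 ≤ r := by
  have hcard : ({K₁, K₂, K₃} : Finset (Fin r)).card = 3 := by
    rw [Finset.card_insert_of_notMem (by simp [h12, h13]),
      Finset.card_insert_of_notMem (by simp [h23]), Finset.card_singleton]
  calc 3 = ({K₁, K₂, K₃} : Finset (Fin r)).card := hcard.symm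
    _ ≤ Fintype.card (Fin r) := Finset.card_le_univ _ |>.trans (by simp)
    _ = r := Fintype.card_fin r

lemma measure_bound (r : ℕ) (E : Set (Finset ℕ)) (t0 : Fin 7)
    (K₁ K₂ K₃ : Fin r) (h12 : K₁ ≠ K₂) (h13 : K₁ ≠ K₃) (h23 : K₂ ≠ K₃)
    (U₁ U₂ W : Fin 4)
    (hE : ∀ g : Fin r → Fin 4, g K₁ = U₁ → g K₂ = U₂ → g K₃ ≠ W → fset r (t0, g) ∈ E) :
    (1 / 182 : ENNReal) ≤
      ((PMF.uniformOfFintype (Fin 7 × (Fin r → Fin 4))).map (fset r)).toOuterMeasure E := by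
  classical
  have hr3 : 3 ≤ r := three_le K₁ K₂ K₃ h12 h13 h23
  set Ω := Fin 7 × (Fin r → Fin 4) with hΩ
  set p := PMF.uniformOfFintype Ω with hp
  rw [PMF.toOuterMeasure_map_apply, PMF.toOuterMeasure_apply]
  set P : Fin r → Finset (Fin 4) := fun k => if k = K₁ then {U₁} else if k = K₂ then {U₂}
      else if k = K₃ then Finset.univ.erase W else Finset.univ with hP
  set S : Finset Ω := {t0} ×ˢ Fintype.piFinset P with hS
  have hmem : ∀ ω ∈ S, ω ∈ fset r ⁻¹' E := by
    rintro ⟨t, g⟩ hω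
    rw [hS, Finset.mem_product] at hω
    have ht : t = t0 := by simpa using hω.1
    have hg := Fintype.mem_piFinset.1 hω.2
    have hg1 : g K₁ = U₁ := by have := hg K₁; simpa [hP] using this
    have hg2 : g K₂ = U₂ := by have := hg K₂; simpa [hP, h12.symm] using this
    have hg3 : g K₃ ≠ W := by
      have := hg K₃
      simp only [hP, if_neg h13.symm, if_neg h23.symm, if_pos rfl] at this
      exact (Finset.mem_erase.1 this).1
    subst ht
    exact hE g hg1 hg2 hg3
  have hstep : ∑ ω ∈ S, (fset r ⁻¹' E).indicator (⇑p) ω ≤ ∑' ω, (fset r ⁻¹' E).indicator (⇑p) ω :=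
    ENNReal.sum_le_tsum S
  refine le_trans ?_ hstep
  have hval : ∀ ω ∈ S, (fset r ⁻¹' E).indicator (⇑p) ω = ((Fintype.card Ω : ℝ≥0∞))⁻¹ := by
    intro ω hω
    rw [Set.indicator_of_mem (hmem ω hω), hp, PMF.uniformOfFintype_apply]
  rw [Finset.sum_congr rfl hval, Finset.sum_const, nsmul_eq_mul]
  have hScard : S.card = 3 * 4 ^ (r - 3) := by
    rw [hS, Finset.card_product, Finset.card_singleton, one_mul]
    exact card_cyl r K₁ K₂ K₃ h12 h13 h23 U₁ U₂ W
  have hΩcard : Fintype.card Ω = 7 * 4 ^ r := by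
    show Fintype.card (Fin 7 × (Fin r → Fin 4)) = 7 * 4 ^ r
    rw [Fintype.card_prod, Fintype.card_fun, Fintype.card_fin, Fintype.card_fin,
      Fintype.card_fin]
  rw [hScard, hΩcard]
  -- now: 1/182 ≤ (3 * 4^(r-3)) * (7 * 4^r)⁻¹ in ℝ≥0∞
  set N : ℕ := 3 * 4 ^ (r - 3) with hN
  set D : ℕ := 7 * 4 ^ r with hD
  have hpow : 4 ^ r = 4 ^ (r - 3) * 64 := by
    have h : r - 3 + 3 = r := by omega
    calc 4 ^ r = 4 ^ (r - 3 + 3) := by rw [h]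
      _ = 4 ^ (r - 3) * 4 ^ 3 := pow_add 4 (r - 3) 3
      _ = 4 ^ (r - 3) * 64 := by norm_num
  have hND : D ≤ 182 * N := by
    calc D = 7 * (4 ^ (r - 3) * 64) := by rw [hD, hpow]
      _ = 448 * 4 ^ (r - 3) := by ring
      _ ≤ 546 * 4 ^ (r - 3) := Nat.mul_le_mul_right _ (by norm_num)
      _ = 182 * N := by rw [hN]; ring
  have hN0 : (N : ℝ≥0∞) ≠ 0 := by
    simp [hN]
  have hNtop : (N : ℝ≥0∞) ≠ ⊤ := ENNReal.natCast_ne_top N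
  have hinv : ((D : ℕ) : ℝ≥0∞)⁻¹ ≥ ((182 * N : ℕ) : ℝ≥0∞)⁻¹ := by
    apply ENNReal.inv_le_inv'
    exact_mod_cast hND
  calc (1 / 182 : ℝ≥0∞) = (N : ℝ≥0∞) * ((182 * N : ℕ) : ℝ≥0∞)⁻¹ := by
        push_cast
        rw [ENNReal.mul_inv (Or.inr hNtop) (Or.inr hN0)]
        rw [← mul_assoc, mul_comm (N : ℝ≥0∞) _, mul_assoc,
          ENNReal.mul_inv_cancel hN0 hNtop, mul_one, one_div]
    _ ≤ (N : ℝ≥0∞) * ((D : ℕ) : ℝ≥0∞)⁻¹ := mul_le_mul_right hinv _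
    _ = _ := by push_cast; ring_nf

lemma exists_dummy {r : ℕ} (hr3 : 3 ≤ r) (K₁ K₂ : Fin r) :
    ∃ K₃ : Fin r, K₁ ≠ K₃ ∧ K₂ ≠ K₃ := by
  have hsub : ({K₁, K₂} : Finset (Fin r)) ⊆ Finset.univ := Finset.subset_univ _
  have hcard : ((Finset.univ : Finset (Fin r)) \ {K₁, K₂}).card
      = r - ({K₁, K₂} : Finset (Fin r)).card := by
    rw [Finset.card_sdiff_of_subset hsub, Finset.card_univ, Fintype.card_fin]
  have hle : ({K₁, K₂} : Finset (Fin r)).card ≤ 2 :=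
    (Finset.card_insert_le _ _).trans (by simp)
  have hpos : 0 < ((Finset.univ : Finset (Fin r)) \ {K₁, K₂}).card := by omega
  obtain ⟨K₃, hK₃⟩ := Finset.card_pos.1 hpos
  rw [Finset.mem_sdiff, Finset.mem_insert, Finset.mem_singleton] at hK₃
  exact ⟨K₃, fun h => hK₃.2 (Or.inl h.symm), fun h => hK₃.2 (Or.inr h.symm)⟩

lemma main_aux (r x y : ℕ) (hr : 2 ≤ r) (hx : x ∈ Finset.Icc 1 (r - 1))
    (hy : y ∈ Finset.Icc 1 (r - 1)) (hxy : x + 4 ≤ y)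
    (hne : ({x, y} : Finset ℕ) ≠ {1, r - 1}) :
    (1 / 182 : ENNReal) ≤
      ((PMF.uniformOfFintype (Fin 7 × (Fin r → Fin 4))).map (fset r)).toOuterMeasure
        {I : Finset ℕ | x ∈ I ∧ y ∈ I} := by
  classical
  rw [Finset.mem_Icc] at hx hy
  have hr6 : 6 ≤ r := by omega
  set d := y - x with hd
  obtain ⟨j, hj3, hjd⟩ : ∃ j ≤ 3, (j + d) % 7 ≤ 3 := by
    by_cases h : d % 7 ≤ 3
    · exact ⟨0, by omega, by omega⟩
    · exact ⟨7 - d % 7, by omega, by omega⟩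
  set t0n := (7 + j - x % 7) % 7 with ht0n
  have ht0lt : t0n < 7 := Nat.mod_lt _ (by norm_num)
  set t0 : Fin 7 := ⟨t0n, ht0lt⟩ with ht0
  have hct : (t0 : ℕ) = t0n := rfl
  have hax : (x + t0n) % 7 = j := by omega
  have hay : (y + t0n) % 7 = (j + d) % 7 := by omega
  set k1n := (x + t0n) / 7 with hk1n
  set k2n := (y + t0n) / 7 with hk2n
  have hk1r : k1n < r := by omega
  have hk2r : k2n < r := by omega
  have hk12 : k1n ≠ k2n := by omega
  set K₁ : Fin r := ⟨k1n, hk1r⟩ with hK₁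
  set K₂ : Fin r := ⟨k2n, hk2r⟩ with hK₂
  have hK12 : K₁ ≠ K₂ := fun h => hk12 (congrArg Fin.val h)
  set U₁ : Fin 4 := ⟨j, by omega⟩ with hU₁
  set U₂ : Fin 4 := ⟨(j + d) % 7, by omega⟩ with hU₂
  -- membership of x and y in preI, given the two coordinate constraints
  have hxpre : ∀ g : Fin r → Fin 4, g K₁ = U₁ → x ∈ preI r t0 g := by
    intro g hg1
    rw [mem_preI, Finset.mem_Icc]
    refine ⟨⟨hx.1, hx.2⟩, by rw [hct, hax]; omega, ?_⟩
    rw [hct, ← hk1n, extg, dif_pos hk1r, ← hK₁, hg1, hax, hU₁]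
  have hypre : ∀ g : Fin r → Fin 4, g K₂ = U₂ → y ∈ preI r t0 g := by
    intro g hg2
    rw [mem_preI, Finset.mem_Icc]
    refine ⟨⟨hy.1, hy.2⟩, by rw [hct, hay]; omega, ?_⟩
    rw [hct, ← hk2n, extg, dif_pos hk2r, ← hK₂, hg2, hay, hU₂]
  -- choose the third coordinate
  set cn := 1 + t0n with hcn
  have hc3r : cn / 7 < r := by omega
  obtain ⟨K₃, W, h13, h23, hkill⟩ :
      ∃ (K₃ : Fin r) (W : Fin 4), K₁ ≠ K₃ ∧ K₂ ≠ K₃ ∧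
        ∀ g : Fin r → Fin 4, g K₁ = U₁ → g K₂ = U₂ → g K₃ ≠ W → y = r - 1 →
          1 ∉ preI r t0 g := by
    by_cases hyr : y = r - 1
    · have hxne1 : x ≠ 1 := by
        intro h
        exact hne (by rw [h, hyr])
      by_cases hw4 : cn % 7 < 4
      · by_cases hk31 : cn / 7 = k1n
        · obtain ⟨K₃, h1, h2⟩ := exists_dummy (by omega) K₁ K₂
          refine ⟨K₃, ⟨0, by norm_num⟩, h1, h2, ?_⟩
          intro g hg1 hg2 _ _ hmem
          obtain ⟨-, hlt, hex⟩ := mem_preI.1 hmem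
          rw [hct, ← hcn, hk31, extg, dif_pos hk1r, ← hK₁, hg1, hU₁] at hex
          have hexj : j = cn % 7 := hex
          omega
        · by_cases hk32 : cn / 7 = k2n
          · obtain ⟨K₃, h1, h2⟩ := exists_dummy (by omega) K₁ K₂
            refine ⟨K₃, ⟨0, by norm_num⟩, h1, h2, ?_⟩
            intro g hg1 hg2 _ _ hmem
            obtain ⟨-, hlt, hex⟩ := mem_preI.1 hmem
            rw [hct, ← hcn, hk32, extg, dif_pos hk2r, ← hK₂, hg2, hU₂] at hex
            have hexj : (j + d) % 7 = cn % 7 := hex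
            omega
          · refine ⟨⟨cn / 7, hc3r⟩, ⟨cn % 7, hw4⟩, ?_, ?_, ?_⟩
            · intro h
              exact hk31 (congrArg Fin.val h).symm
            · intro h
              exact hk32 (congrArg Fin.val h).symm
            · intro g _ _ hg3 _ hmem
              obtain ⟨-, hlt, hex⟩ := mem_preI.1 hmem
              rw [hct, ← hcn, extg, dif_pos hc3r] at hex
              exact hg3 (Fin.ext hex)
      · obtain ⟨K₃, h1, h2⟩ := exists_dummy (by omega) K₁ K₂
        refine ⟨K₃, ⟨0, by norm_num⟩, h1, h2, ?_⟩
        intro g _ _ _ _ hmem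
        obtain ⟨-, hlt, -⟩ := mem_preI.1 hmem
        rw [hct, ← hcn] at hlt
        exact hw4 hlt
    · obtain ⟨K₃, h1, h2⟩ := exists_dummy (by omega) K₁ K₂
      exact ⟨K₃, ⟨0, by norm_num⟩, h1, h2, fun g _ _ _ h => absurd h hyr⟩
  apply measure_bound r _ t0 K₁ K₂ K₃ hK12 h13 h23 U₁ U₂ W
  intro g hg1 hg2 hg3
  have hxp := hxpre g hg1
  have hyp := hypre g hg2
  have hxner : x ≠ r - 1 := by omega
  show x ∈ fset r (t0, g) ∧ y ∈ fset r (t0, g)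
  unfold fset
  by_cases h1 : 1 ∈ preI r t0 g
  · have hyner : y ≠ r - 1 := by
      intro h
      exact hkill g hg1 hg2 hg3 h h1
    rw [if_pos h1]
    exact ⟨Finset.mem_erase.2 ⟨hxner, hxp⟩, Finset.mem_erase.2 ⟨hyner, hyp⟩⟩
  · rw [if_neg h1]
    exact ⟨hxp, hyp⟩

/-- For every `r ≥ 2` there is a probability distribution over sparse subsets of
`{1, …, r−1}` such that every admissible pair `x, y` (with `|x − y| ≥ 4` and
`{x, y} ≠ {1, r−1}`) is contained in a random sparse set with probability at least
`1/182`. -/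
theorem stmt9 (r : ℕ) (hr : 2 ≤ r) :
    ∃ 𝒟 : PMF (Finset ℕ),
      (∀ I ∈ 𝒟.support, SparseSet r I) ∧
      ∀ x y : ℕ, x ∈ Finset.Icc 1 (r - 1) → y ∈ Finset.Icc 1 (r - 1) →
        4 ≤ |(x : ℤ) - (y : ℤ)| → ({x, y} : Finset ℕ) ≠ {1, r - 1} →
        (1 / 182 : ENNReal) ≤ 𝒟.toOuterMeasure {I | x ∈ I ∧ y ∈ I} := by
  refine ⟨(PMF.uniformOfFintype (Fin 7 × (Fin r → Fin 4))).map (fset r), ?_, ?_⟩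
  · intro I hI
    rw [PMF.support_map] at hI
    obtain ⟨ω, -, rfl⟩ := hI
    exact fset_sparse r ω
  · intro x y hx hy habs hne
    rcases lt_trichotomy x y with h | h | h
    · have hxy : x + 4 ≤ y := by
        rcases abs_cases ((x : ℤ) - y) with ⟨he, -⟩ | ⟨he, -⟩ <;> rw [he] at habs <;> omega
      exact main_aux r x y hr hx hy hxy hne
    · exfalso
      subst h
      rcases abs_cases ((x : ℤ) - x) with ⟨he, -⟩ | ⟨he, -⟩ <;> rw [he] at habs <;> omega
    · have hxy : y + 4 ≤ x := by
        rcases abs_cases ((x : ℤ) - y) with ⟨he, -⟩ | ⟨he, -⟩ <;> rw [he] at habs <;> omega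
      have hset : {I : Finset ℕ | x ∈ I ∧ y ∈ I} = {I : Finset ℕ | y ∈ I ∧ x ∈ I} := by
        ext I
        exact and_comm
      rw [hset]
      rw [Finset.pair_comm] at hne
      exact main_aux r y x hr hy hx hxy hne
end

section
/- There exists a universal constant c > 0 such that for every integer r ≥ 2 there exists a family 𝓘 = {I_1, …, I_ℓ} with ℓ ≤ c · log r, satisfying: (1) each I_t ⊆ {1, …, r−1} is sparse; and (2) for all x, y ∈ {1, …, r−1} with |x − y| ≥ 4 and {x, y} ≠ {1, r−1}, there exists some t ∈ {1, …, ℓ} such that {x, y} ⊆ I_t. -/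
open Finset

def FourSeparated (X : Finset ℕ) : Prop :=
  ∀ i ∈ X, ∀ j ∈ X, i ≠ j → 4 ≤ |(i : ℤ) - (j : ℤ)|

lemma four_le_abs_sub_iff {x y : ℕ} : 4 ≤ |(x : ℤ) - (y : ℤ)| ↔ x + 4 ≤ y ∨ y + 4 ≤ x := by
  rw [le_abs]; omega

lemma fourSeparated_iff {X : Finset ℕ} :
    FourSeparated X ↔ ∀ x ∈ X, ∀ y ∈ X, x ≠ y → x + 4 ≤ y ∨ y + 4 ≤ x := by
  simp only [FourSeparated, four_le_abs_sub_iff]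

section EraseEnds

def eraseEnds (r : ℕ) (F : Finset (Finset ℕ)) : Finset (Finset ℕ) :=
  F.image (·.erase 1) ∪ F.image (·.erase (r - 1))

variable {r : ℕ} {F : Finset (Finset ℕ)}

lemma sparseSet_erase {X : Finset ℕ} {e : ℕ} (hX : X ⊆ Icc 1 (r - 1)) (hsep : FourSeparated X)
    (he : e ∈ ({1, r - 1} : Finset ℕ)) : SparseSet r (X.erase e) := by
  refine ⟨(erase_subset e X).trans hX, fun i hi j hj => hsep i (mem_of_mem_erase hi) j
    (mem_of_mem_erase hj), ?_⟩
  calc (({1, r - 1} : Finset ℕ) ∩ X.erase e).card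
      ≤ (({1, r - 1} : Finset ℕ).erase e).card := by
        rw [inter_erase]; exact card_le_card (erase_subset_erase e inter_subset_left)
    _ = ({1, r - 1} : Finset ℕ).card - 1 := card_erase_of_mem he
    _ ≤ 1 := by have := card_le_two (a := 1) (b := r - 1); omega

lemma sparseSet_of_mem_eraseEnds (hF : ∀ X ∈ F, X ⊆ Icc 1 (r - 1) ∧ FourSeparated X)
    {Y : Finset ℕ} (hY : Y ∈ eraseEnds r F) : SparseSet r Y := by
  simp only [eraseEnds, mem_union, mem_image] at hY
  rcases hY with ⟨X, hX, rfl⟩ | ⟨X, hX, rfl⟩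
  · exact sparseSet_erase (hF X hX).1 (hF X hX).2 (by simp)
  · exact sparseSet_erase (hF X hX).1 (hF X hX).2 (by simp)

lemma ne_and_ne_or_ne_and_ne_of_pair_ne {α : Type*} [DecidableEq α] {a b x y : α} (hab : a ≠ b)
    (h : ({x, y} : Finset α) ≠ {a, b}) : (x ≠ a ∧ y ≠ a) ∨ (x ≠ b ∧ y ≠ b) := by
  by_contra! hc
  grind [pair_comm]

lemma exists_mem_eraseEnds (hr : 3 ≤ r) {X : Finset ℕ} (hX : X ∈ F) {x y : ℕ} (hx : x ∈ X)
    (hy : y ∈ X) (hxy : ({x, y} : Finset ℕ) ≠ {1, r - 1}) :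
    ∃ Y ∈ eraseEnds r F, x ∈ Y ∧ y ∈ Y := by
  rcases ne_and_ne_or_ne_and_ne_of_pair_ne (by omega) hxy with ⟨hx1, hy1⟩ | ⟨hx1, hy1⟩
  · exact ⟨X.erase 1, mem_union_left _ (mem_image_of_mem _ hX),
      mem_erase.2 ⟨hx1, hx⟩, mem_erase.2 ⟨hy1, hy⟩⟩
  · exact ⟨X.erase (r - 1), mem_union_right _ (mem_image_of_mem _ hX),
      mem_erase.2 ⟨hx1, hx⟩, mem_erase.2 ⟨hy1, hy⟩⟩

lemma card_eraseEnds_le : (eraseEnds r F).card ≤ 2 * F.card := by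
  have h1 := card_image_le (s := F) (f := fun X => X.erase 1)
  have h2 := card_image_le (s := F) (f := fun X => X.erase (r - 1))
  exact (card_union_le _ _).trans (by omega)

end EraseEnds

def residuePairSet (r u g : ℕ) : Finset ℕ :=
  (Icc 1 (r - 1)).filter fun z => z % 12 = u ∨ z % 12 = (u + g) % 12

def smallGapFamily (r : ℕ) : Finset (Finset ℕ) :=
  (range 12 ×ˢ Icc 4 8).image fun p => residuePairSet r p.1 p.2

lemma fourSeparated_residuePairSet {r u g : ℕ} (hg : 4 ≤ g) (hg' : g ≤ 8) :
    FourSeparated (residuePairSet r u g) := by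
  rw [fourSeparated_iff]
  intro x hx y hy hxy
  simp only [residuePairSet, mem_filter] at hx hy
  omega

lemma card_smallGapFamily_le (r : ℕ) : (smallGapFamily r).card ≤ 60 :=
  card_image_le.trans (by simp)

lemma exists_mem_smallGapFamily {r x y : ℕ} (hx : x ∈ Icc 1 (r - 1)) (hy : y ∈ Icc 1 (r - 1))
    (hxy : x + 4 ≤ y) (hyx : y ≤ x + 8) : ∃ X ∈ smallGapFamily r, x ∈ X ∧ y ∈ X := by
  refine ⟨residuePairSet r (x % 12) (y - x), mem_image.2 ⟨(x % 12, y - x), ?_, rfl⟩, ?_, ?_⟩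
  · simp only [mem_product, mem_range, mem_Icc]; omega
  · exact mem_filter.2 ⟨hx, Or.inl rfl⟩
  · exact mem_filter.2 ⟨hy, Or.inr (by omega)⟩

lemma add_lt_of_div_add_two_le {L z w : ℕ} (hL : 0 < L) (h : z / L + 2 ≤ w / L) : z + L < w := by
  have hz := Nat.lt_mul_div_succ z hL
  have hw := (Nat.le_div_iff_mul_le hL).1 h
  nlinarith

lemma div_add_two_le_div_of_le {L x y : ℕ} (hL : 0 < L) (h2 : x + 2 * L ≤ y)
    (h4 : y ≤ x + 4 * L) : x / L + 2 ≤ y / L ∧ y / L ≤ x / L + 4 := by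
  rw [← Nat.add_mul_div_right x 2 hL, ← Nat.add_mul_div_right x 4 hL]
  exact ⟨Nat.div_le_div_right (by linarith), Nat.div_le_div_right (by linarith)⟩

lemma exists_two_pow_scale_of_eight_le {g : ℕ} (hg : 8 ≤ g) :
    ∃ i, 2 ≤ i ∧ i < Nat.log 2 g ∧ 2 * 2 ^ i ≤ g ∧ g ≤ 4 * 2 ^ i := by
  have h3 : 3 ≤ Nat.log 2 g := (Nat.le_log_iff_pow_le (by norm_num) (by omega)).2 (by simpa)
  refine ⟨Nat.log 2 g - 1, by omega, by omega, ?_, ?_⟩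
  · calc 2 * 2 ^ (Nat.log 2 g - 1) = 2 ^ Nat.log 2 g := by
          rw [← pow_succ']; congr 1; omega
      _ ≤ g := Nat.pow_log_le_self 2 (by omega)
  · calc g ≤ 2 ^ (Nat.log 2 g + 1) := (Nat.lt_pow_succ_log_self (by norm_num) g).le
      _ = 4 * 2 ^ (Nat.log 2 g - 1) := by
          rw [show Nat.log 2 g + 1 = Nat.log 2 g - 1 + 2 by omega, pow_add]; ring

def blockPairSet (r L s t a δ : ℕ) : Finset ℕ :=
  (Icc 1 (r - 1)).filter fun z =>
    (z % 4 = s ∧ z / L % 6 = a) ∨ (z % 4 = t ∧ z / L % 6 = (a + δ) % 6)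

def largeGapFamily (r : ℕ) : Finset (Finset ℕ) :=
  (Icc 2 (Nat.log 2 r) ×ˢ range 4 ×ˢ range 4 ×ˢ range 6 ×ˢ Icc 2 4).image
    fun p => blockPairSet r (2 ^ p.1) p.2.1 p.2.2.1 p.2.2.2.1 p.2.2.2.2

lemma fourSeparated_blockPairSet {r L s t a δ : ℕ} (hL : 4 ≤ L) (hδ : 2 ≤ δ) (hδ' : δ ≤ 4) :
    FourSeparated (blockPairSet r L s t a δ) := by
  rw [fourSeparated_iff]
  intro x hx y hy hxy
  simp only [blockPairSet, mem_filter] at hx hy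
  have far_blocks : ∀ z w, z / L % 6 = a → w / L % 6 = (a + δ) % 6 → z + 4 ≤ w ∨ w + 4 ≤ z := by
    intro z w hz hw
    have := @add_lt_of_div_add_two_le L z w (by omega)
    have := @add_lt_of_div_add_two_le L w z (by omega)
    omega
  rcases hx.2 with ⟨hx4, hxb⟩ | ⟨hx4, hxb⟩ <;> rcases hy.2 with ⟨hy4, hyb⟩ | ⟨hy4, hyb⟩
  · omega
  · exact far_blocks x y hxb hyb
  · exact (far_blocks y x hyb hxb).symm
  · omega

lemma card_largeGapFamily_le (r : ℕ) : (largeGapFamily r).card ≤ 288 * Nat.log 2 r := by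
  refine card_image_le.trans ?_
  simp only [card_product, Nat.card_Icc, card_range]
  omega

lemma exists_mem_largeGapFamily {r x y : ℕ} (hx : x ∈ Icc 1 (r - 1)) (hy : y ∈ Icc 1 (r - 1))
    (hxy : x + 8 ≤ y) : ∃ X ∈ largeGapFamily r, x ∈ X ∧ y ∈ X := by
  obtain ⟨i, hi2, hig, hgL, hLg⟩ := exists_two_pow_scale_of_eight_le (g := y - x) (by omega)
  have hir : i ≤ Nat.log 2 r := hig.le.trans (Nat.log_mono_right (by simp at hy; omega))
  obtain ⟨hlo, hhi⟩ := div_add_two_le_div_of_le (x := x) (y := y) (L := 2 ^ i) (by positivity)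
    (by omega) (by omega)
  refine ⟨_, mem_image.2 ⟨(i, x % 4, y % 4, x / 2 ^ i % 6, y / 2 ^ i - x / 2 ^ i), ?_, rfl⟩, ?_, ?_⟩
  · simp only [mem_product, mem_range, mem_Icc]; omega
  · exact mem_filter.2 ⟨hx, Or.inl ⟨rfl, rfl⟩⟩
  · exact mem_filter.2 ⟨hy, Or.inr ⟨rfl, by dsimp only; omega⟩⟩

def baseFamily (r : ℕ) : Finset (Finset ℕ) :=
  smallGapFamily r ∪ largeGapFamily r

lemma subset_and_fourSeparated_of_mem_baseFamily {r : ℕ} {X : Finset ℕ} (hX : X ∈ baseFamily r) :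
    X ⊆ Icc 1 (r - 1) ∧ FourSeparated X := by
  simp only [baseFamily, smallGapFamily, largeGapFamily, mem_union, mem_image, mem_product,
    mem_Icc] at hX
  rcases hX with ⟨p, ⟨-, hg⟩, rfl⟩ | ⟨p, ⟨⟨hi, -⟩, -, -, -, hδ⟩, rfl⟩
  · exact ⟨filter_subset _ _, fourSeparated_residuePairSet hg.1 hg.2⟩
  · refine ⟨filter_subset _ _, fourSeparated_blockPairSet ?_ hδ.1 hδ.2⟩
    calc 4 = 2 ^ 2 := rfl
      _ ≤ 2 ^ p.1 := Nat.pow_le_pow_right (by norm_num) hi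

lemma exists_mem_baseFamily {r x y : ℕ} (hx : x ∈ Icc 1 (r - 1)) (hy : y ∈ Icc 1 (r - 1))
    (hxy : 4 ≤ |(x : ℤ) - (y : ℤ)|) : ∃ X ∈ baseFamily r, x ∈ X ∧ y ∈ X := by
  rw [four_le_abs_sub_iff] at hxy
  wlog hle : x + 4 ≤ y generalizing x y
  · obtain ⟨X, hX, hyX, hxX⟩ := this hy hx hxy.symm (by omega)
    exact ⟨X, hX, hxX, hyX⟩
  by_cases hsmall : y ≤ x + 8
  · obtain ⟨X, hX, hxX, hyX⟩ := exists_mem_smallGapFamily hx hy hle hsmall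
    exact ⟨X, mem_union_left _ hX, hxX, hyX⟩
  · obtain ⟨X, hX, hxX, hyX⟩ := exists_mem_largeGapFamily hx hy (by omega)
    exact ⟨X, mem_union_right _ hX, hxX, hyX⟩

lemma card_eraseEnds_baseFamily_le {r : ℕ} (hr : 2 ≤ r) :
    (eraseEnds r (baseFamily r)).card ≤ 696 * Nat.log 2 r := by
  have hlog : 1 ≤ Nat.log 2 r := Nat.log_pos (by norm_num) hr
  have := card_union_le (smallGapFamily r) (largeGapFamily r)
  have := card_smallGapFamily_le r
  have := card_largeGapFamily_le r
  have := card_eraseEnds_le (r := r) (F := baseFamily r)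
  rw [baseFamily] at *
  omega

lemma natLog_two_le_log_div_log_two (r : ℕ) : (Nat.log 2 r : ℝ) ≤ Real.log r / Real.log 2 := by
  simpa [Real.logb] using Real.natLog_le_logb r 2

/-- There is a universal constant `c > 0` such that for every `r ≥ 2` there is a family
of at most `c · log r` sparse subsets of `{1, …, r−1}` covering every admissible pair
`x, y` (with `|x − y| ≥ 4` and `{x, y} ≠ {1, r−1}`). -/
theorem stmt10 : ∃ c : ℝ, 0 < c ∧
    ∀ r : ℕ, 2 ≤ r →
      ∃ (ℓ : ℕ) (I : Fin ℓ → Finset ℕ),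
        (ℓ : ℝ) ≤ c * Real.log r ∧
        (∀ t, SparseSet r (I t)) ∧
        ∀ x y : ℕ, x ∈ Finset.Icc 1 (r - 1) → y ∈ Finset.Icc 1 (r - 1) →
          4 ≤ |(x : ℤ) - (y : ℤ)| → ({x, y} : Finset ℕ) ≠ {1, r - 1} →
          ∃ t, x ∈ I t ∧ y ∈ I t := by
  refine ⟨696 / Real.log 2, by positivity, fun r hr => ?_⟩
  set F := eraseEnds r (baseFamily r)
  refine ⟨F.card, fun t => F.equivFin.symm t, ?_, fun t => ?_, ?_⟩
  · calc (F.card : ℝ) ≤ 696 * Nat.log 2 r := mod_cast card_eraseEnds_baseFamily_le hr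
      _ ≤ 696 * (Real.log r / Real.log 2) := by gcongr; exact natLog_two_le_log_div_log_two r
      _ = 696 / Real.log 2 * Real.log r := by ring
  · exact sparseSet_of_mem_eraseEnds (fun X => subset_and_fourSeparated_of_mem_baseFamily)
      (F.equivFin.symm t).2
  · intro x y hx hy hxy hne
    obtain ⟨X, hX, hxX, hyX⟩ := exists_mem_baseFamily hx hy hxy
    have hr3 : 3 ≤ r := by
      have := four_le_abs_sub_iff.1 hxy
      simp only [mem_Icc] at hx hy
      omega
    obtain ⟨Y, hY, hxY, hyY⟩ := exists_mem_eraseEnds hr3 hX hxX hyX hne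
    exact ⟨F.equivFin ⟨Y, hY⟩, by simpa using hxY, by simpa using hyY⟩
end
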